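/- arXiv:1807.09604 — 2 statements merged into one kernel-verified Lean document; each statement's English description precedes it below -/
import Mathlib

section
/- Let 𝒬 be a finite set, let 0 < p_1,…,p_m < ∞ with P := ∑_{j=1}^m p_j ≥ 1, let G : 𝒬 → [0,∞), let B_1,…,B_m > 0, and let 0 < C_1, C_2 < ∞. Then the estimate ∑_{Q ∈ 𝒬} G(Q) ≤ C_1^P C_2^P ∏_{j=1}^m B_j^{p_j} holds if and only if the following holds: for every function M : 𝒬 → [0,∞) with ∑_{Q ∈ 𝒬} M(Q) = 1 there exist functions S_1,…,S_m : 𝒬 → [0,∞) such that G(Q) M(Q)^{P-1} ≤ C_1^P ∏_{j=1}^m S_j(Q)^{p_j} for every Q ∈ 𝒬, and ∑_{Q ∈ 𝒬} S_j(Q) ≤ C_2 B_j for every j. -/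
/-!
For `⇒`, put `T = ∑ G` and take `S_j(Q) = C₂ B_j (G(Q)/T)^{1/P} M(Q)^{1-1/P}`: then
`C₁^P ∏ S_j^{p_j} = C₁^P C₂^P ∏ B_j^{p_j} · (G/T) M^{P-1} ≥ G M^{P-1}`, while the two-point
weighted AM–GM inequality gives `∑_Q (G/T)^{1/P} M^{1-1/P} ≤ 1`.

For `⇐`, test the hypothesis with `M = G/T`. Taking `P`-th roots gives
`T^{1/P} G(Q)/T ≤ C₁ ∏_j S_j(Q)^{p_j/P}`, and summing over `Q` with Hölder's inequality for the
weights `p_j/P` yields `T^{1/P} ≤ C₁ ∏_j (C₂ B_j)^{p_j/P}`.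
-/

open Finset

section Inequalities

variable {ι κ : Type*}

theorem sum_prod_rpow_le_prod_rpow (s : Finset κ) (t : Finset ι) {w : κ → ℝ}
    (hw : ∀ j ∈ s, 0 ≤ w j) (hw1 : ∑ j ∈ s, w j = 1) {f : κ → ι → ℝ}
    (hf : ∀ j ∈ s, ∀ i ∈ t, 0 ≤ f j i) {c : κ → ℝ} (hc : ∀ j ∈ s, 0 < c j)
    (hfc : ∀ j ∈ s, ∑ i ∈ t, f j i ≤ c j) :
    ∑ i ∈ t, ∏ j ∈ s, f j i ^ w j ≤ ∏ j ∈ s, c j ^ w j := by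
  set K := ∏ j ∈ s, c j ^ w j
  have hK : 0 ≤ K := prod_nonneg fun j hj => Real.rpow_nonneg (hc j hj).le _
  have amgm : ∀ i ∈ t, ∏ j ∈ s, f j i ^ w j ≤ K * ∑ j ∈ s, w j * (f j i / c j) := by
    intro i hi
    have hfc0 : ∀ j ∈ s, 0 ≤ f j i / c j := fun j hj => div_nonneg (hf j hj i hi) (hc j hj).le
    have hscale : ∏ j ∈ s, f j i ^ w j = K * ∏ j ∈ s, (f j i / c j) ^ w j := by
      rw [← prod_mul_distrib]
      refine prod_congr rfl fun j hj => ?_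
      rw [← Real.mul_rpow (hc j hj).le (hfc0 j hj), mul_div_cancel₀ _ (hc j hj).ne']
    rw [hscale]
    exact mul_le_mul_of_nonneg_left (Real.geom_mean_le_arith_mean_weighted s w _ hw hw1 hfc0) hK
  calc ∑ i ∈ t, ∏ j ∈ s, f j i ^ w j
      ≤ ∑ i ∈ t, K * ∑ j ∈ s, w j * (f j i / c j) := sum_le_sum amgm
    _ = K * ∑ j ∈ s, w j * ((∑ i ∈ t, f j i) / c j) := by
      rw [← mul_sum, sum_comm]
      simp only [sum_div, mul_sum]
    _ ≤ K * ∑ j ∈ s, w j := by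
      gcongr with j hj
      exact mul_le_of_le_one_right (hw j hj) ((div_le_one (hc j hj)).2 (hfc j hj))
    _ = K := by rw [hw1, mul_one]

theorem sum_rpow_mul_rpow_le_one (t : Finset ι) {a b : ι → ℝ} (ha : ∀ i ∈ t, 0 ≤ a i)
    (hb : ∀ i ∈ t, 0 ≤ b i) (ha1 : ∑ i ∈ t, a i ≤ 1) (hb1 : ∑ i ∈ t, b i ≤ 1) {θ : ℝ}
    (hθ0 : 0 ≤ θ) (hθ1 : θ ≤ 1) :
    ∑ i ∈ t, a i ^ θ * b i ^ (1 - θ) ≤ 1 := by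
  calc ∑ i ∈ t, a i ^ θ * b i ^ (1 - θ) ≤ ∑ i ∈ t, (θ * a i + (1 - θ) * b i) :=
        sum_le_sum fun i hi => Real.geom_mean_le_arith_mean2_weighted hθ0 (sub_nonneg.2 hθ1)
          (ha i hi) (hb i hi) (add_sub_cancel _ _)
    _ = θ * ∑ i ∈ t, a i + (1 - θ) * ∑ i ∈ t, b i := by rw [sum_add_distrib, mul_sum, mul_sum]
    _ ≤ 1 := by nlinarith

theorem le_mul_div_sum_of_sum_le {s : Finset ι} {G : ι → ℝ} (hG : ∀ i ∈ s, 0 ≤ G i) {K : ℝ}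
    (hK : ∑ j ∈ s, G j ≤ K) {i : ι} (hi : i ∈ s) : G i ≤ K * (G i / ∑ j ∈ s, G j) := by
  rcases (sum_nonneg hG).eq_or_lt with h0 | hpos
  · simp [(sum_eq_zero_iff_of_nonneg hG).1 h0.symm i hi]
  · calc G i = (∑ j ∈ s, G j) * (G i / ∑ j ∈ s, G j) := by field_simp
      _ ≤ K * (G i / ∑ j ∈ s, G j) :=
        mul_le_mul_of_nonneg_right hK (div_nonneg (hG i hi) hpos.le)

theorem prod_const_mul_rpow (s : Finset κ) {p : κ → ℝ} (hp : ∀ j ∈ s, 0 ≤ p j) {t : ℝ}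
    (ht : 0 ≤ t) {c : κ → ℝ} (hc : ∀ j ∈ s, 0 ≤ c j) :
    ∏ j ∈ s, (t * c j) ^ p j = t ^ (∑ j ∈ s, p j) * ∏ j ∈ s, c j ^ p j := by
  rw [Real.rpow_sum_of_nonneg ht hp, ← prod_mul_distrib]
  exact prod_congr rfl fun j hj => Real.mul_rpow ht (hc j hj)

theorem mul_prod_rpow_div_rpow (s : Finset κ) {p : κ → ℝ} {P : ℝ} (hP : P ≠ 0) {c : ℝ}
    (hc : 0 ≤ c) {b : κ → ℝ} (hb : ∀ j ∈ s, 0 ≤ b j) :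
    (c * ∏ j ∈ s, b j ^ (p j / P)) ^ P = c ^ P * ∏ j ∈ s, b j ^ p j := by
  rw [Real.mul_rpow hc (prod_nonneg fun j hj => Real.rpow_nonneg (hb j hj) _),
    ← Real.finsetProd_rpow _ _ fun j hj => Real.rpow_nonneg (hb j hj) _]
  congr 1
  exact prod_congr rfl fun j hj => by rw [← Real.rpow_mul (hb j hj), div_mul_cancel₀ _ hP]

end Inequalities

section Duality

variable {ι κ : Type*} [Fintype ι] [Fintype κ] {p : κ → ℝ} {P : ℝ} {G : ι → ℝ} {B : κ → ℝ}
  {C₁ C₂ : ℝ}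

theorem exists_factorization_of_sum_le (hp : ∀ j, 0 ≤ p j) (hP : P = ∑ j, p j) (hP1 : 1 ≤ P)
    (hG : ∀ Q, 0 ≤ G Q) (hB : ∀ j, 0 ≤ B j) (hC₂ : 0 ≤ C₂)
    (hsum : ∑ Q, G Q ≤ C₁ ^ P * C₂ ^ P * ∏ j, B j ^ p j) {M : ι → ℝ} (hM : ∀ Q, 0 ≤ M Q)
    (hM1 : ∑ Q, M Q ≤ 1) :
    ∃ S : κ → ι → ℝ, (∀ j Q, 0 ≤ S j Q) ∧
      (∀ Q, G Q * M Q ^ (P - 1) ≤ C₁ ^ P * ∏ j, S j Q ^ p j) ∧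
      (∀ j, ∑ Q, S j Q ≤ C₂ * B j) := by
  have hP0 : 0 < P := zero_lt_one.trans_le hP1
  set T := ∑ Q, G Q
  have hGT : ∀ Q, 0 ≤ G Q / T := fun Q => div_nonneg (hG Q) (sum_nonneg fun Q _ => hG Q)
  -- no case split on `T = 0`: then `G = 0`, and `G Q / 0 = 0` makes `w = 0` and `S = 0`
  set w : ι → ℝ := fun Q => (G Q / T) ^ P⁻¹ * M Q ^ (1 - P⁻¹)
  have hw0 : ∀ Q, 0 ≤ w Q := fun Q =>
    mul_nonneg (Real.rpow_nonneg (hGT Q) _) (Real.rpow_nonneg (hM Q) _)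
  have hwP : ∀ Q, w Q ^ P = G Q / T * M Q ^ (P - 1) := fun Q => by
    rw [Real.mul_rpow (Real.rpow_nonneg (hGT Q) _) (Real.rpow_nonneg (hM Q) _),
      Real.rpow_inv_rpow (hGT Q) hP0.ne', ← Real.rpow_mul (hM Q), sub_mul,
      inv_mul_cancel₀ hP0.ne', one_mul]
  have hw1 : ∑ Q, w Q ≤ 1 :=
    sum_rpow_mul_rpow_le_one _ (fun Q _ => hGT Q) (fun Q _ => hM Q)
      (by rw [← sum_div]; exact div_self_le_one T) hM1 (inv_nonneg.2 hP0.le)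
      (inv_le_one_of_one_le₀ hP1)
  refine ⟨fun j Q => C₂ * w Q * B j, fun j Q => mul_nonneg (mul_nonneg hC₂ (hw0 Q)) (hB j),
    fun Q => ?_, fun j => ?_⟩
  · rw [prod_const_mul_rpow _ (fun j _ => hp j) (mul_nonneg hC₂ (hw0 Q)) fun j _ => hB j, ← hP,
      Real.mul_rpow hC₂ (hw0 Q), hwP]
    calc G Q * M Q ^ (P - 1)
        ≤ (C₁ ^ P * C₂ ^ P * ∏ j, B j ^ p j) * (G Q / T) * M Q ^ (P - 1) :=
          mul_le_mul_of_nonneg_right (le_mul_div_sum_of_sum_le (fun Q _ => hG Q) hsum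
            (mem_univ Q)) (Real.rpow_nonneg (hM Q) _)
      _ = _ := by ring
  · rw [← sum_mul, ← mul_sum]
    exact mul_le_mul_of_nonneg_right (mul_le_of_le_one_right hC₂ hw1) (hB j)

theorem sum_le_of_forall_exists_factorization (hp : ∀ j, 0 ≤ p j) (hP : P = ∑ j, p j)
    (hP0 : 0 < P) (hG : ∀ Q, 0 ≤ G Q) (hB : ∀ j, 0 < B j) (hC₁ : 0 ≤ C₁) (hC₂ : 0 < C₂)
    (h : ∀ M : ι → ℝ, (∀ Q, 0 ≤ M Q) → (∑ Q, M Q) = 1 →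
      ∃ S : κ → ι → ℝ, (∀ j Q, 0 ≤ S j Q) ∧
        (∀ Q, G Q * M Q ^ (P - 1) ≤ C₁ ^ P * ∏ j, S j Q ^ p j) ∧
        (∀ j, ∑ Q, S j Q ≤ C₂ * B j)) :
    ∑ Q, G Q ≤ C₁ ^ P * C₂ ^ P * ∏ j, B j ^ p j := by
  set T := ∑ Q, G Q
  have hT0 : 0 ≤ T := sum_nonneg fun Q _ => hG Q
  rcases hT0.eq_or_lt with hT | hT
  · rw [← hT]
    exact mul_nonneg (by positivity) (prod_nonneg fun j _ => Real.rpow_nonneg (hB j).le _)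
  have hu : ∀ Q, 0 ≤ G Q / T := fun Q => div_nonneg (hG Q) hT.le
  obtain ⟨S, hS0, hSG, hSB⟩ := h (fun Q => G Q / T) hu (by rw [← sum_div, div_self hT.ne'])
  -- the `P`-th power of `hpoint Q` is `hSG Q`
  have hpoint : ∀ Q, T ^ P⁻¹ * (G Q / T) ≤ C₁ * ∏ j, S j Q ^ (p j / P) := fun Q => by
    have hGu : G Q * (G Q / T) ^ (P - 1) = T * (G Q / T) ^ P := by
      nth_rw 1 [← mul_div_cancel₀ (G Q) hT.ne']
      rw [mul_assoc, ← Real.rpow_one_add' (hu Q) (by linarith), add_sub_cancel]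
    rw [← Real.rpow_le_rpow_iff (mul_nonneg (Real.rpow_nonneg hT.le _) (hu Q))
        (mul_nonneg hC₁ (prod_nonneg fun j _ => Real.rpow_nonneg (hS0 j Q) _)) hP0,
      mul_prod_rpow_div_rpow _ hP0.ne' hC₁ fun j _ => hS0 j Q,
      Real.mul_rpow (Real.rpow_nonneg hT.le _) (hu Q), Real.rpow_inv_rpow hT.le hP0.ne', ← hGu]
    exact hSG Q
  have hroot : T ^ P⁻¹ ≤ C₁ * ∏ j, (C₂ * B j) ^ (p j / P) :=
    calc T ^ P⁻¹ = ∑ Q, T ^ P⁻¹ * (G Q / T) := by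
          rw [← mul_sum, ← sum_div, div_self hT.ne', mul_one]
      _ ≤ ∑ Q, C₁ * ∏ j, S j Q ^ (p j / P) := sum_le_sum fun Q _ => hpoint Q
      _ ≤ C₁ * ∏ j, (C₂ * B j) ^ (p j / P) := by
        rw [← mul_sum]
        refine mul_le_mul_of_nonneg_left (sum_prod_rpow_le_prod_rpow _ _
          (fun j _ => div_nonneg (hp j) hP0.le) ?_ (fun j _ Q _ => hS0 j Q)
          (fun j _ => mul_pos hC₂ (hB j)) fun j _ => hSB j) hC₁
        rw [← sum_div, ← hP, div_self hP0.ne']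
  calc T = (T ^ P⁻¹) ^ P := (Real.rpow_inv_rpow hT.le hP0.ne').symm
    _ ≤ (C₁ * ∏ j, (C₂ * B j) ^ (p j / P)) ^ P :=
      Real.rpow_le_rpow (by positivity) hroot hP0.le
    _ = C₁ ^ P * C₂ ^ P * ∏ j, B j ^ p j := by
      rw [mul_prod_rpow_div_rpow _ hP0.ne' hC₁ fun j _ => (mul_pos hC₂ (hB j)).le,
        prod_const_mul_rpow _ (fun j _ => hp j) hC₂.le fun j _ => (hB j).le, ← hP, mul_assoc]

end Duality

/-- **Multilinear duality** (Proposition 3.1 / `prop:multilinear-duality`):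
the estimate `∑_Q G(Q) ≤ C₁^P C₂^P ∏_j B_j^{p_j}` is equivalent to the
existence, for every probability weight `M`, of factorizing functions
`S_1, …, S_m` with `G(Q) M(Q)^{P-1} ≤ C₁^P ∏_j S_j(Q)^{p_j}` and
`∑_Q S_j(Q) ≤ C₂ B_j`. -/
theorem multilinear_duality {ι : Type*} [Fintype ι] (m : ℕ)
    (p : Fin m → ℝ) (hp : ∀ j, 0 < p j) (P : ℝ) (hP : P = ∑ j, p j) (hP1 : 1 ≤ P)
    (G : ι → ℝ) (hG : ∀ Q, 0 ≤ G Q)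
    (B : Fin m → ℝ) (hB : ∀ j, 0 < B j)
    (C₁ C₂ : ℝ) (hC₁ : 0 < C₁) (hC₂ : 0 < C₂) :
    (∑ Q, G Q ≤ C₁ ^ P * C₂ ^ P * ∏ j, B j ^ p j) ↔
      (∀ M : ι → ℝ, (∀ Q, 0 ≤ M Q) → (∑ Q, M Q) = 1 →
        ∃ S : Fin m → ι → ℝ,
          (∀ j Q, 0 ≤ S j Q) ∧
          (∀ Q, G Q * M Q ^ (P - 1) ≤ C₁ ^ P * ∏ j, S j Q ^ p j) ∧
          (∀ j, ∑ Q, S j Q ≤ C₂ * B j)) :=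
  ⟨fun hsum _ hM hM1 => exists_factorization_of_sum_le (fun j => (hp j).le) hP hP1 hG
      (fun j => (hB j).le) hC₂.le hsum hM hM1.le,
    sum_le_of_forall_exists_factorization (fun j => (hp j).le) hP (zero_lt_one.trans_le hP1) hG
      hB hC₁.le hC₂⟩
end

section
/- Let μ be a finite nonnegative Borel measure on ℝ^n with finite first moment ∫ |w| dμ(w) < ∞, and suppose that the set 𝔹_μ := {v ∈ ℝ^n : ∫ |⟨v,w⟩| dμ(w) ≤ 1} is bounded. Then ( ∫ ⋯ ∫ |det(w_1, …, w_n)| dμ(w_1) ⋯ dμ(w_n) ) · vol(𝔹_μ) ≥ c(n) for a constant c(n) > 0 depending only on n, where det(w_1,…,w_n) is the determinant of the matrix with columns w_1,…,w_n and vol denotes Lebesgue measure. -/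
open MeasureTheory
open scoped ENNReal

noncomputable section

abbrev Euc (n : ℕ) : Type := EuclideanSpace ℝ (Fin n)

/-- The unit ball `𝔹_μ = {v : 𝔰_μ(v) ≤ 1}` of the seminorm
`𝔰_μ(v) = ∫ |⟨v,w⟩| dμ(w)`. -/
def seminormBall {n : ℕ} (μ : Measure (Euc n)) : Set (Euc n) :=
  {v : Euc n | (∫ w, |(inner ℝ v w : ℝ)| ∂μ) ≤ 1}

/-!
Write `p = 𝔰_μ`, `K = 𝔹_μ` (a compact convex body) and pick `v ∈ Kⁿ` maximizing `|det v|`.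
By Cramer's rule `det (v₁, …, x, …, vₙ) = det v · ⟨f_l, x⟩` for the rows `f_l` of the inverse
of the matrix of `v`, so maximality gives `|⟨f_l, x⟩| ≤ 1` on `K`, i.e. `|⟨f_l, x⟩| ≤ p x`, while
`|det f| = |det v|⁻¹`.

Replace the `f_l` one at a time by signed means `z(u) = ∫ sign ⟨u, w⟩ w dμ(w)`: writing the
functional `x ↦ det (…, x, …)` as `⟨g, ·⟩`, we have `⟨g, f_l⟩ ≤ p g = ⟨g, z(g)⟩`, so `|det|` never
decreases. By multilinearity `det (z(u₁), …, z(uₙ)) = ∫ (∏ sign ⟨u_l, w_l⟩) det w dμⁿ(w)`, hence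
`|det v|⁻¹ ≤ ∫ |det| dμⁿ`. Finally the linear map `e_l ↦ v_l` sends the Euclidean ball of radius
`1/(n+1)` into `K`, so `vol K ≥ |det v| · vol B(1/(n+1))`.
-/

open scoped RealInnerProductSpace Matrix

theorem Seminorm.abs_le_of_abs_le_one_on_closedBall {E : Type*} [AddCommGroup E] [Module ℝ E]
    (p : Seminorm ℝ E) (φ : E →ₗ[ℝ] ℝ) (h : ∀ x ∈ p.closedBall 0 1, |φ x| ≤ 1) (x : E) :
    |φ x| ≤ p x := by
  by_contra! hlt
  obtain ⟨c, hpc, hcφ⟩ := exists_between hlt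
  have hc : 0 < c := (apply_nonneg p x).trans_lt hpc
  have hx : c⁻¹ • x ∈ p.closedBall 0 1 := by
    rw [Seminorm.mem_closedBall_zero, map_smul_eq_mul, Real.norm_eq_abs, abs_inv, abs_of_pos hc,
      inv_mul_le_one₀ hc]
    exact hpc.le
  have := h _ hx
  rw [map_smul, smul_eq_mul, abs_mul, abs_inv, abs_of_pos hc, inv_mul_le_one₀ hc] at this
  linarith

theorem Module.Basis.exists_mem_closedBall_det_ne_zero {E ι : Type*} [AddCommGroup E]
    [Module ℝ E] [Fintype ι] [DecidableEq ι] (b : Module.Basis ι ℝ E) (p : Seminorm ℝ E) :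
    ∃ x : ι → E, (∀ l, x l ∈ p.closedBall 0 1) ∧ b.det x ≠ 0 := by
  have hpos (l : ι) : 0 < p (b l) + 1 := by linarith [apply_nonneg p (b l)]
  refine ⟨fun l => (p (b l) + 1)⁻¹ • b l, fun l => ?_, ?_⟩
  · rw [Seminorm.mem_closedBall_zero, map_smul_eq_mul, norm_inv, Real.norm_eq_abs,
      abs_of_pos (hpos l), inv_mul_le_one₀ (hpos l)]
    linarith
  · rw [AlternatingMap.map_smul_univ, b.det_self, smul_eq_mul, mul_one]
    exact Finset.prod_ne_zero_iff.2 fun l _ => (inv_pos.2 (hpos l)).ne'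

theorem Module.Basis.det_update_eq_det_mul_inv_mulVec {R M ι : Type*} [Field R] [AddCommGroup M]
    [Module R M] [Fintype ι] [DecidableEq ι] (b : Module.Basis ι R M) {v : ι → M}
    (hv : b.det v ≠ 0) (l : ι) (x : M) :
    b.det (Function.update v l x) = b.det v * ((b.toMatrix v)⁻¹ *ᵥ b.repr x) l := by
  rw [b.det_apply, b.toMatrix_update, ← Matrix.cramer_apply,
    ← Matrix.det_smul_inv_mulVec_eq_cramer _ _ (isUnit_iff_ne_zero.2 hv), b.det_apply]
  rfl

section BasisDetIntegral

variable {E : Type*} [NormedAddCommGroup E] [NormedSpace ℝ E] [FiniteDimensional ℝ E]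
  {ι : Type*} (b : Module.Basis ι ℝ E) {X : Type*} [MeasurableSpace X] {μ : Measure X}

theorem Module.Basis.integrable_repr_apply {f : X → E} (hf : Integrable f μ) (j : ι) :
    Integrable (fun x => b.repr (f x) j) μ :=
  (LinearMap.toContinuousLinearMap (b.coord j)).integrable_comp hf

theorem Module.Basis.integral_repr_apply {f : X → E} (hf : Integrable f μ) (j : ι) :
    ∫ x, b.repr (f x) j ∂μ = b.repr (∫ x, f x ∂μ) j :=
  (LinearMap.toContinuousLinearMap (b.coord j)).integral_comp_comm hf

variable [Fintype ι] [DecidableEq ι] [SigmaFinite μ] {a : ι → X → E}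

theorem Module.Basis.integrable_det_comp_pi (ha : ∀ l, Integrable (a l) μ) :
    Integrable (fun x : ι → X => b.det fun l => a l (x l)) (Measure.pi fun _ => μ) := by
  simp only [Module.Basis.det_apply, Matrix.det_apply', Module.Basis.toMatrix_apply]
  exact integrable_finsetSum _ fun σ _ =>
    (Integrable.fintype_prod fun i => b.integrable_repr_apply (ha i) _).const_mul _

theorem Module.Basis.det_integral_eq_integral_pi (ha : ∀ l, Integrable (a l) μ) :
    b.det (fun l => ∫ w, a l w ∂μ) = ∫ x, b.det (fun l => a l (x l)) ∂(Measure.pi fun _ => μ) := by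
  simp only [Module.Basis.det_apply, Matrix.det_apply', Module.Basis.toMatrix_apply]
  rw [integral_finsetSum _ fun σ _ =>
    (Integrable.fintype_prod fun i => b.integrable_repr_apply (ha i) _).const_mul _]
  refine Finset.sum_congr rfl fun σ _ => ?_
  rw [integral_const_mul, integral_fintype_prod_eq_prod (fun i w => b.repr (a i w) (σ i))]
  simp only [b.integral_repr_apply (ha _)]

end BasisDetIntegral

section OrthonormalBasis

variable {E : Type*} [NormedAddCommGroup E] [InnerProductSpace ℝ E]
  {ι : Type*} [Fintype ι] (b : OrthonormalBasis ι ℝ E)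

theorem OrthonormalBasis.abs_repr_apply_le (x : E) (l : ι) : |b.repr x l| ≤ ‖x‖ := by
  simpa using PiLp.norm_apply_le (b.repr x) l

variable [DecidableEq ι]

theorem OrthonormalBasis.exists_dual_of_isMaxOn_abs_det {K : Set E} {v : ι → E}
    (hv : v ∈ Set.univ.pi fun _ => K)
    (hmax : IsMaxOn (fun x => |b.toBasis.det x|) (Set.univ.pi fun _ => K) v)
    (hdet : b.toBasis.det v ≠ 0) :
    ∃ f : ι → E, (∀ l, ∀ x ∈ K, |⟪f l, x⟫| ≤ 1) ∧ |b.toBasis.det f| = |b.toBasis.det v|⁻¹ := by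
  set V := b.toBasis.toMatrix v
  set f : ι → E := fun l => b.repr.symm (WithLp.toLp 2 (V⁻¹ l))
  have hf (l : ι) (x : E) :
      b.toBasis.det (Function.update v l x) = b.toBasis.det v * ⟪f l, x⟫ := by
    rw [b.toBasis.det_update_eq_det_mul_inv_mulVec hdet, LinearIsometryEquiv.inner_map_eq_flip]
    simp [V, Matrix.mulVec, dotProduct, PiLp.inner_apply, b.repr_apply_apply, mul_comm]
  refine ⟨f, fun l x hx => ?_, ?_⟩
  · have hle : |b.toBasis.det (Function.update v l x)| ≤ |b.toBasis.det v| :=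
      hmax ((Set.update_mem_pi_iff_of_mem hv).2 fun _ => hx)
    rw [hf, abs_mul] at hle
    exact le_of_mul_le_mul_left (by simpa using hle) (abs_pos.2 hdet)
  · have hF : b.toBasis.toMatrix f = V⁻¹ᵀ := by
      ext i l
      simp [f, Module.Basis.toMatrix_apply]
    rw [b.toBasis.det_apply, hF, Matrix.det_transpose, Matrix.det_nonsing_inv,
      Ring.inverse_eq_inv', abs_inv]
    rfl

theorem OrthonormalBasis.ofReal_abs_det_mul_measure_ball_le [FiniteDimensional ℝ E]
    [MeasurableSpace E] [BorelSpace E] (μ : Measure E) [μ.IsAddHaarMeasure] (p : Seminorm ℝ E)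
    {v : ι → E} (hv : ∀ l, v l ∈ p.closedBall 0 1) :
    ENNReal.ofReal |b.toBasis.det v| * μ (Metric.ball 0 (Fintype.card ι + 1)⁻¹)
      ≤ μ (p.closedBall 0 1) := by
  set T := b.toBasis.constr ℝ v
  have hT : LinearMap.det T = b.toBasis.det v := by
    rw [← LinearMap.det_toMatrix b.toBasis, b.toBasis.det_apply,
      b.toBasis.toMatrix_eq_toMatrix_constr]
    rfl
  rw [← hT, ← Measure.addHaar_image_linearMap]
  refine measure_mono ?_
  rintro _ ⟨x, hx, rfl⟩
  rw [Metric.mem_ball, dist_zero_right] at hx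
  rw [Seminorm.mem_closedBall_zero, Module.Basis.constr_apply_fintype (S := ℝ)]
  calc p (∑ l, b.toBasis.equivFun x l • v l) ≤ ∑ l, p (b.toBasis.equivFun x l • v l) :=
        Finset.le_sum_of_subadditive p (map_zero p).le (map_add_le_add p) _ _
    _ ≤ ∑ _l : ι, ‖x‖ := Finset.sum_le_sum fun l _ => by
        rw [map_smul_eq_mul, Real.norm_eq_abs]
        exact (mul_le_of_le_one_right (abs_nonneg _) (p.mem_closedBall_zero.1 (hv l))).trans
          (by simpa using b.abs_repr_apply_le x l)
    _ ≤ 1 := by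
        rw [Finset.sum_const, Finset.card_univ, nsmul_eq_mul]
        have := mul_lt_mul_of_pos_right hx (by positivity : (0 : ℝ) < Fintype.card ι + 1)
        rw [inv_mul_cancel₀ (by positivity)] at this
        nlinarith [norm_nonneg x]

end OrthonormalBasis

section AbsInnerSeminorm

variable {E : Type*} [NormedAddCommGroup E] [InnerProductSpace ℝ E] [MeasurableSpace E]
  [OpensMeasurableSpace E] {μ : Measure E}

theorem integrable_abs_inner_of_integrable_norm (hμ : Integrable (fun w => ‖w‖) μ) (v : E) :
    Integrable (fun w => |⟪v, w⟫|) μ :=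
  (hμ.const_mul ‖v‖).mono' (continuous_const.inner continuous_id).abs.aestronglyMeasurable
    (.of_forall fun w => by simpa using abs_real_inner_le_norm v w)

def absInnerSeminorm (μ : Measure E) (hμ : Integrable (fun w => ‖w‖) μ) : Seminorm ℝ E :=
  .of (fun v => ∫ w, |⟪v, w⟫| ∂μ)
    (fun x y => by
      rw [← integral_add (integrable_abs_inner_of_integrable_norm hμ x)
        (integrable_abs_inner_of_integrable_norm hμ y)]
      refine integral_mono (integrable_abs_inner_of_integrable_norm hμ (x + y))
        ((integrable_abs_inner_of_integrable_norm hμ x).add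
          (integrable_abs_inner_of_integrable_norm hμ y)) fun w => ?_
      simpa only [inner_add_left] using abs_add_le _ _)
    (fun c v => by simp only [real_inner_smul_left, abs_mul, integral_const_mul, Real.norm_eq_abs])

theorem absInnerSeminorm_apply (hμ : Integrable (fun w => ‖w‖) μ) (v : E) :
    absInnerSeminorm μ hμ v = ∫ w, |⟪v, w⟫| ∂μ := rfl

theorem absInnerSeminorm_le (hμ : Integrable (fun w => ‖w‖) μ) (v : E) :
    absInnerSeminorm μ hμ v ≤ (∫ w, ‖w‖ ∂μ) * ‖v‖ := by
  rw [absInnerSeminorm_apply, mul_comm, ← integral_const_mul]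
  exact integral_mono (integrable_abs_inner_of_integrable_norm hμ v) (hμ.const_mul ‖v‖)
    fun w => abs_real_inner_le_norm v w

theorem continuous_absInnerSeminorm (hμ : Integrable (fun w => ‖w‖) μ) :
    Continuous (absInnerSeminorm μ hμ) := by
  set M := (∫ w, ‖w‖ ∂μ).toNNReal
  refine Seminorm.continuous_of_le (q := M • normSeminorm ℝ E)
    (continuous_norm.const_smul M) fun v => ?_
  show _ ≤ M • ‖v‖
  rw [NNReal.smul_def, smul_eq_mul, Real.coe_toNNReal _ (integral_nonneg fun _ => norm_nonneg _)]
  exact absInnerSeminorm_le hμ v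

theorem isClosed_closedBall_absInnerSeminorm (hμ : Integrable (fun w => ‖w‖) μ) (r : ℝ) :
    IsClosed ((absInnerSeminorm μ hμ).closedBall 0 r) := by
  rw [Seminorm.closedBall_zero_eq]
  exact isClosed_le (continuous_absInnerSeminorm hμ) continuous_const

end AbsInnerSeminorm

theorem monotone_coe_sign {α : Type*} [Ring α] [LinearOrder α] [IsStrictOrderedRing α] :
    Monotone (fun x : α => (SignType.sign x : α)) := by
  intro a b hab
  simp only [sign_apply]
  split_ifs <;> norm_num <;> order

theorem abs_coe_sign_le_one {α : Type*} [Ring α] [LinearOrder α] [IsStrictOrderedRing α] (x : α) :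
    |(SignType.sign x : α)| ≤ 1 := by
  rcases lt_trichotomy x 0 with h | h | h <;> simp [h]

theorem measurable_sign_inner {E : Type*} [NormedAddCommGroup E] [InnerProductSpace ℝ E]
    [MeasurableSpace E] [OpensMeasurableSpace E] (u : E) :
    Measurable fun w : E => (SignType.sign ⟪u, w⟫ : ℝ) :=
  monotone_coe_sign.measurable.comp (continuous_const.inner continuous_id).measurable

section SignedMean

variable {E : Type*} [NormedAddCommGroup E] [InnerProductSpace ℝ E] [FiniteDimensional ℝ E]
  [MeasurableSpace E] [BorelSpace E] {μ : Measure E}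

def signedMean (μ : Measure E) (u : E) : E := ∫ w, (SignType.sign ⟪u, w⟫ : ℝ) • w ∂μ

theorem integrable_sign_inner_smul (hμ : Integrable (fun w => ‖w‖) μ) (u : E) :
    Integrable (fun w => (SignType.sign ⟪u, w⟫ : ℝ) • w) μ :=
  hμ.mono' ((measurable_sign_inner u).smul measurable_id).aestronglyMeasurable
    (.of_forall fun w => by
      simpa [norm_smul] using mul_le_of_le_one_left (norm_nonneg w) (abs_coe_sign_le_one ⟪u, w⟫))

theorem inner_signedMean_self (hμ : Integrable (fun w => ‖w‖) μ) (u : E) :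
    ⟪u, signedMean μ u⟫ = absInnerSeminorm μ hμ u := by
  simp only [signedMean, ← integral_inner (integrable_sign_inner_smul hμ u), real_inner_smul_right,
    sign_mul_self, absInnerSeminorm_apply]

variable {ι : Type*} [DecidableEq ι]

theorem exists_abs_le_abs_update_signedMean (hμ : Integrable (fun w => ‖w‖) μ)
    (F : MultilinearMap ℝ (fun _ : ι => E) ℝ) (c : ι → E) (k : ι)
    (hc : ∀ v, |⟪v, c k⟫| ≤ absInnerSeminorm μ hμ v) :
    ∃ u, |F c| ≤ |F (Function.update c k (signedMean μ u))| := by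
  set g := (InnerProductSpace.toDual ℝ E).symm (F.toLinearMap c k).toContinuousLinearMap
  have hg (x : E) : F (Function.update c k x) = ⟪g, x⟫ := by
    simp [g, InnerProductSpace.toDual_symm_apply, MultilinearMap.toLinearMap_apply]
  refine ⟨g, ?_⟩
  calc |F c| = |⟪g, c k⟫| := by rw [← hg, Function.update_eq_self]
    _ ≤ absInnerSeminorm μ hμ g := hc g
    _ = ⟪g, signedMean μ g⟫ := (inner_signedMean_self hμ g).symm
    _ ≤ |F (Function.update c k (signedMean μ g))| := by rw [hg]; exact le_abs_self _

theorem exists_abs_le_abs_signedMean [Fintype ι] (hμ : Integrable (fun w => ‖w‖) μ)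
    (F : MultilinearMap ℝ (fun _ : ι => E) ℝ) (y : ι → E)
    (hy : ∀ l v, |⟪v, y l⟫| ≤ absInnerSeminorm μ hμ v) :
    ∃ u : ι → E, |F y| ≤ |F fun l => signedMean μ (u l)| := by
  suffices ∀ s : Finset ι, ∃ u : ι → E, |F y| ≤ |F (s.piecewise (fun l => signedMean μ (u l)) y)| by
    simpa using this Finset.univ
  intro s
  induction s using Finset.induction_on with
  | empty => exact ⟨0, by simp⟩
  | insert k s hk ih =>
    obtain ⟨u, hu⟩ := ih
    obtain ⟨g, hg⟩ := exists_abs_le_abs_update_signedMean hμ F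
      (s.piecewise (fun l => signedMean μ (u l)) y) k
      (by rw [Finset.piecewise_eq_of_notMem _ _ _ hk]; exact hy k)
    refine ⟨Function.update u k g, hu.trans (hg.trans_eq ?_)⟩
    rw [Finset.piecewise_insert, Function.update_self]
    congr 3
    refine s.piecewise_congr (fun l hl => ?_) fun _ _ => rfl
    rw [Function.update_of_ne (ne_of_mem_of_not_mem hl hk)]

variable [Fintype ι] [SigmaFinite μ]

theorem abs_det_signedMean_le (hμ : Integrable (fun w => ‖w‖) μ) (b : Module.Basis ι ℝ E)
    (u : ι → E) :
    |b.det fun l => signedMean μ (u l)| ≤ ∫ x, |b.det x| ∂(Measure.pi fun _ => μ) := by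
  have hid : Integrable (fun w => w) μ :=
    (integrable_norm_iff measurable_id.aestronglyMeasurable).1 hμ
  unfold signedMean
  rw [b.det_integral_eq_integral_pi fun l => integrable_sign_inner_smul hμ (u l),
    ← Real.norm_eq_abs]
  refine norm_integral_le_of_norm_le (b.integrable_det_comp_pi fun _ => hid).abs
    (.of_forall fun x => ?_)
  rw [AlternatingMap.map_smul_univ, norm_smul, Real.norm_eq_abs, Real.norm_eq_abs,
    Finset.abs_prod]
  exact mul_le_of_le_one_left (abs_nonneg _)
    (Finset.prod_le_one (fun _ _ => abs_nonneg _) fun l _ => abs_coe_sign_le_one _)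

theorem inv_abs_det_le_integral_of_isMaxOn (hμ : Integrable (fun w => ‖w‖) μ)
    (b : OrthonormalBasis ι ℝ E) {v : ι → E}
    (hv : v ∈ Set.univ.pi fun _ => (absInnerSeminorm μ hμ).closedBall 0 1)
    (hmax : IsMaxOn (fun x => |b.toBasis.det x|)
      (Set.univ.pi fun _ => (absInnerSeminorm μ hμ).closedBall 0 1) v)
    (hdet : b.toBasis.det v ≠ 0) :
    |b.toBasis.det v|⁻¹ ≤ ∫ x, |b.toBasis.det x| ∂(Measure.pi fun _ => μ) := by
  obtain ⟨f, hfK, hf⟩ := b.exists_dual_of_isMaxOn_abs_det hv hmax hdet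
  obtain ⟨u, hu⟩ := exists_abs_le_abs_signedMean hμ b.toBasis.det.toMultilinearMap f
    fun l y => by
      simpa only [innerₛₗ_apply_apply, real_inner_comm] using
        (absInnerSeminorm μ hμ).abs_le_of_abs_le_one_on_closedBall (innerₛₗ ℝ (f l)) (hfK l) y
  exact hf ▸ hu.trans (abs_det_signedMean_le hμ b.toBasis u)

end SignedMean

theorem seminormBall_eq_closedBall {n : ℕ} {μ : Measure (Euc n)}
    (hμ : Integrable (fun w => ‖w‖) μ) :
    seminormBall μ = (absInnerSeminorm μ hμ).closedBall 0 1 := by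
  ext v
  exact (Seminorm.mem_closedBall_zero (p := absInnerSeminorm μ hμ)).symm

/-- **Wedge estimate** (Lemma 3.5 / `lem:wedge`, cf. Theorem 3.1 of
Bennett–Bez–Flock–Lee): for a finite measure `μ` with finite first moment and
bounded `𝔹_μ`, one has `1 ≲ |μ^{∧n}| · vol(𝔹_μ)`. -/
theorem wedge_power_volume_lower_bound (n : ℕ) :
    ∃ c : ℝ, 0 < c ∧
      ∀ (μ : Measure (Euc n)) [IsFiniteMeasure μ],
        Integrable (fun w : Euc n => ‖w‖) μ →
        Bornology.IsBounded (seminormBall μ) →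
        c ≤ (∫ w : Fin n → Euc n, |Matrix.det (Matrix.of fun i l => (w l) i)|
              ∂ Measure.pi fun _ => μ) * (volume (seminormBall μ)).toReal := by
  set b := EuclideanSpace.basisFun (Fin n) ℝ
  set c := (volume (Metric.ball (0 : Euc n) ((n : ℝ) + 1)⁻¹)).toReal
  refine ⟨c, ENNReal.toReal_pos (Metric.measure_ball_pos volume 0 (by positivity)).ne'
    measure_ball_lt_top.ne, fun μ _ hμ hbd => ?_⟩
  set p := absInnerSeminorm μ hμ
  have hdet (w : Fin n → Euc n) : Matrix.det (Matrix.of fun i l => w l i) = b.toBasis.det w := rfl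
  simp only [hdet, seminormBall_eq_closedBall hμ] at hbd ⊢
  have hK : IsCompact (p.closedBall 0 1) :=
    Metric.isCompact_of_isClosed_isBounded (isClosed_closedBall_absInnerSeminorm hμ 1) hbd
  obtain ⟨x, hxK, hx⟩ := b.toBasis.exists_mem_closedBall_det_ne_zero p
  obtain ⟨v, hvK, hvmax⟩ := (isCompact_univ_pi fun _ => hK).exists_isMaxOn ⟨x, fun l _ => hxK l⟩
    b.toBasis.continuous_toMatrix.matrix_det.abs.continuousOn
  have hv : b.toBasis.det v ≠ 0 := abs_pos.1 ((abs_pos.2 hx).trans_le (hvmax fun l _ => hxK l))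
  have hI := inv_abs_det_le_integral_of_isMaxOn hμ b hvK hvmax hv
  have hvol := ENNReal.toReal_mono hK.measure_lt_top.ne
    (b.ofReal_abs_det_mul_measure_ball_le volume p fun l => hvK l trivial)
  rw [ENNReal.toReal_mul, ENNReal.toReal_ofReal (abs_nonneg _), Fintype.card_fin] at hvol
  calc c = |b.toBasis.det v|⁻¹ * (|b.toBasis.det v| * c) := by field_simp
    _ ≤ _ := mul_le_mul hI hvol (by positivity) ((inv_nonneg.2 (abs_nonneg _)).trans hI)

end
end
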